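/- Let K' be an s_{12}-invariant polynomial in k[x1,x2,x3] (k a field, m a nonnegative integer) such that (x1-x2)^(2m+1)·K' + (x2-x3)^(2m+1)·(sK') + (x3-x1)^(2m+1)·(s^2 K') = 0, where s = (1 2 3). Then K = (x1-x2)^(2m+1)·K' is m-quasi-invariant. -/
import Mathlib

open MvPolynomial

def IsQuasiInvariant {k : Type*} [Field k] (m : ℕ)
    (K : MvPolynomial (Fin 3) k) : Prop :=
  ∀ i j : Fin 3, i ≠ j →
    (X i - X j) ^ (2 * m + 1) ∣ K - rename (Equiv.swap i j) K

theorem converse_std_criterion {k : Type*} [Field k] (m : ℕ)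
    (K' : MvPolynomial (Fin 3) k)
    (hinv : rename (Equiv.swap (0 : Fin 3) 1) K' = K')
    (hrel : (X 0 - X 1) ^ (2 * m + 1) * K'
          + (X 1 - X 2) ^ (2 * m + 1) * rename (finRotate 3) K'
          + (X 2 - X 0) ^ (2 * m + 1) * rename (finRotate 3) (rename (finRotate 3) K') = 0) :
    IsQuasiInvariant m ((X 0 - X 1) ^ (2 * m + 1) * K') := by
  intro i j hij
  set N := 2 * m + 1 with hN
  have hodd : Odd N := ⟨m, by omega⟩
  set A : MvPolynomial (Fin 3) k := rename (finRotate 3) K' with hA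
  set B : MvPolynomial (Fin 3) k := rename (finRotate 3) A with hB
  have e10 : (X 1 - X 0 : MvPolynomial (Fin 3) k) ^ N = -((X 0 - X 1) ^ N) := by
    rw [← neg_sub]; exact hodd.neg_pow _
  have e21 : (X 2 - X 1 : MvPolynomial (Fin 3) k) ^ N = -((X 1 - X 2) ^ N) := by
    rw [← neg_sub]; exact hodd.neg_pow _
  have e20 : (X 2 - X 0 : MvPolynomial (Fin 3) k) ^ N = -((X 0 - X 2) ^ N) := by
    rw [← neg_sub]; exact hodd.neg_pow _
  have hf1 : (⇑(Equiv.swap (0 : Fin 3) 2) ∘ ⇑(Equiv.swap (0 : Fin 3) 1)) = ⇑(finRotate 3) := by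
    decide
  have hf2 : (⇑(Equiv.swap (1 : Fin 3) 2) ∘ ⇑(Equiv.swap (0 : Fin 3) 1))
      = (⇑(finRotate 3) ∘ ⇑(finRotate 3)) := by decide
  have h02 : rename (Equiv.swap (0 : Fin 3) 2) K' = A := by
    conv_lhs => rw [← hinv]
    rw [rename_rename, hf1]
  have h12 : rename (Equiv.swap (1 : Fin 3) 2) K' = B := by
    conv_lhs => rw [← hinv]
    rw [rename_rename, hf2, ← rename_rename]
  have r01 : rename (Equiv.swap (0 : Fin 3) 1) ((X 0 - X 1) ^ N * K')
      = (X 1 - X 0) ^ N * K' := by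
    rw [map_mul, map_pow, map_sub, rename_X, rename_X, Equiv.swap_apply_left,
      Equiv.swap_apply_right, hinv]
  have r02 : rename (Equiv.swap (0 : Fin 3) 2) ((X 0 - X 1) ^ N * K')
      = (X 2 - X 1) ^ N * A := by
    rw [map_mul, map_pow, map_sub, rename_X, rename_X, Equiv.swap_apply_left,
      Equiv.swap_apply_of_ne_of_ne (by decide) (by decide), h02]
  have r12 : rename (Equiv.swap (1 : Fin 3) 2) ((X 0 - X 1) ^ N * K')
      = (X 0 - X 2) ^ N * B := by
    rw [map_mul, map_pow, map_sub, rename_X, rename_X,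
      Equiv.swap_apply_of_ne_of_ne (by decide) (by decide), Equiv.swap_apply_left, h12]
  fin_cases i <;> fin_cases j
  · exact absurd rfl hij
  · show (X 0 - X 1 : MvPolynomial (Fin 3) k) ^ N ∣
      (X 0 - X 1) ^ N * K' - rename (Equiv.swap (0 : Fin 3) 1) ((X 0 - X 1) ^ N * K')
    exact ⟨K' + K', by rw [r01, e10]; ring⟩
  · show (X 0 - X 2 : MvPolynomial (Fin 3) k) ^ N ∣
      (X 0 - X 1) ^ N * K' - rename (Equiv.swap (0 : Fin 3) 2) ((X 0 - X 1) ^ N * K')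
    exact ⟨B, by rw [r02, e21]; linear_combination hrel - e20 * B⟩
  · show (X 1 - X 0 : MvPolynomial (Fin 3) k) ^ N ∣
      (X 0 - X 1) ^ N * K' - rename (Equiv.swap (1 : Fin 3) 0) ((X 0 - X 1) ^ N * K')
    rw [e10, neg_dvd, Equiv.swap_comm]
    exact ⟨K' + K', by rw [r01, e10]; ring⟩
  · exact absurd rfl hij
  · show (X 1 - X 2 : MvPolynomial (Fin 3) k) ^ N ∣
      (X 0 - X 1) ^ N * K' - rename (Equiv.swap (1 : Fin 3) 2) ((X 0 - X 1) ^ N * K')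
    exact ⟨-A, by rw [r12]; linear_combination hrel - e20 * B⟩
  · show (X 2 - X 0 : MvPolynomial (Fin 3) k) ^ N ∣
      (X 0 - X 1) ^ N * K' - rename (Equiv.swap (2 : Fin 3) 0) ((X 0 - X 1) ^ N * K')
    rw [e20, neg_dvd, Equiv.swap_comm]
    exact ⟨B, by rw [r02, e21]; linear_combination hrel - e20 * B⟩
  · show (X 2 - X 1 : MvPolynomial (Fin 3) k) ^ N ∣
      (X 0 - X 1) ^ N * K' - rename (Equiv.swap (2 : Fin 3) 1) ((X 0 - X 1) ^ N * K')
    rw [e21, neg_dvd, Equiv.swap_comm]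
    exact ⟨-A, by rw [r12]; linear_combination hrel - e20 * B⟩
  · exact absurd rfl hij
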